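/- For λ ∈ Γ_k and 0 ≤ l < k ≤ n, the function λ ↦ [σ_k(λ)/σ_l(λ)]^{1/(k-l)} is monotone (elliptic) on Γ_k: each partial derivative ∂/∂λ_i of this function is strictly positive, i.e. σ_{k-1}(λ|i)σ_l(λ) - σ_k(λ)σ_{l-1}(λ|i) > 0 for each i. -/

import Mathlib

open Finset

/-- The k-th elementary symmetric function of x = (x_1,...,x_n). -/
noncomputable def esymm (n k : ℕ) (x : Fin n → ℝ) : ℝ :=
  ∑ s ∈ (Finset.univ : Finset (Fin n)).powersetCard k, ∏ i ∈ s, x i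

/-- σ_k(x | i): the k-th elementary symmetric function of x with the i-th entry deleted. -/
noncomputable def esymmDel (n k : ℕ) (x : Fin n → ℝ) (i : Fin n) : ℝ :=
  ∑ s ∈ ((Finset.univ : Finset (Fin n)).erase i).powersetCard k, ∏ j ∈ s, x j

/-- The Garding cone Γ_k = {x : σ_j(x) > 0 for all 1 ≤ j ≤ k}. -/
def gardingCone (n k : ℕ) : Set (Fin n → ℝ) :=
  {x | ∀ j : ℕ, 1 ≤ j → j ≤ k → 0 < esymm n j x}

/-- σ_k for integer index, with the convention σ_k = 0 for k < 0. -/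
noncomputable def esymmZ (n : ℕ) (k : ℤ) (x : Fin n → ℝ) : ℝ :=
  if k < 0 then 0 else esymm n k.toNat x

/-- σ_k(x|i) for integer index, with the convention σ_k = 0 for k < 0. -/
noncomputable def esymmDelZ (n : ℕ) (k : ℤ) (x : Fin n → ℝ) (i : Fin n) : ℝ :=
  if k < 0 then 0 else esymmDel n k.toNat x i

/-!
Writing `σ_r(λ) = σ_r(λ|i) + λ_i σ_{r-1}(λ|i)` turns the claim into
`σ_{k-1}(λ|i) σ_l(λ|i) > σ_k(λ|i) σ_{l-1}(λ|i)`. Since deleting an entry maps `Γ_k` into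
`Γ_{k-1}`, this is the strict decrease of `σ_{r+1} / σ_r` while the `σ_r` are positive, which
follows from Newton's inequalities. Those are proved by differentiating `∏ (X + λ_j)` down to the
degree `j + 2` (Rolle keeps the roots real and leaves the normalised `σ_r / C(m, r)` unchanged),
where they become Cauchy–Schwarz for the reciprocals of the roots.
-/

namespace Multiset

section CommSemiring

variable {R : Type*} [CommSemiring R]

@[simp]
theorem esymm_zero (s : Multiset R) : s.esymm 0 = 1 := by
  simp [esymm]

theorem esymm_of_card_lt {s : Multiset R} {k : ℕ} (h : card s < k) : s.esymm k = 0 := by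
  simp [esymm, powersetCard_eq_empty k h]

theorem esymm_card (s : Multiset R) : s.esymm (card s) = s.prod := by
  simp [esymm]

theorem esymm_one (s : Multiset R) : s.esymm 1 = s.sum := by
  simp [esymm, powersetCard_one]

theorem esymm_cons_succ (a : R) (s : Multiset R) (k : ℕ) :
    (a ::ₘ s).esymm (k + 1) = s.esymm (k + 1) + a * s.esymm k := by
  simp [esymm, sum_map_mul_left]

end CommSemiring

theorem two_mul_esymm_two {R : Type*} [CommRing R] (s : Multiset R) :
    2 * s.esymm 2 = s.sum ^ 2 - (s.map (· ^ 2)).sum := by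
  induction s using Multiset.induction with
  | empty => simp [esymm_of_card_lt (show card (0 : Multiset R) < 2 by simp)]
  | cons a s ih =>
    rw [esymm_cons_succ, esymm_one, sum_cons, map_cons, sum_cons]
    linear_combination ih

theorem prod_mul_esymm_map_inv {K : Type*} [Field K] {s : Multiset K} (hs : ∀ a ∈ s, a ≠ 0)
    {k : ℕ} (hk : k ≤ card s) : s.prod * (s.map (·⁻¹)).esymm k = s.esymm (card s - k) := by
  induction s using Multiset.induction generalizing k with
  | empty => simp_all
  | cons a s ih =>
    have ha : a ≠ 0 := hs a (mem_cons_self a s)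
    have ih' := fun {k} => ih (fun b hb => hs b (mem_cons_of_mem hb)) (k := k)
    rw [card_cons] at hk ⊢
    rcases k with _ | k
    · simp [← esymm_card]
    rw [map_cons, esymm_cons_succ, prod_cons]
    rcases Nat.lt_or_eq_of_le hk with hk | hk
    · rw [show card s + 1 - (k + 1) = card s - (k + 1) + 1 by omega, esymm_cons_succ,
        ← ih' (by omega), show card s - (k + 1) + 1 = card s - k by omega, ← ih' (by omega)]
      field_simp
      ring
    · have h := ih' (k := k) (by omega)
      rw [show card s - k = 0 by omega, esymm_zero] at h
      rw [show card s + 1 - (k + 1) = 0 by omega, esymm_zero,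
        esymm_of_card_lt (by rw [card_map]; omega), zero_add,
        mul_mul_mul_comm, mul_inv_cancel₀ ha, one_mul, h]

open Polynomial in
theorem esymm_map_add_const {R : Type*} [CommRing R] (s : Multiset R) (c : R) (j : ℕ) :
    (s.map (· + c)).esymm j =
      ∑ r ∈ Finset.range (j + 1),
        ((card s - r).choose (j - r) : R) * s.esymm r * c ^ (j - r) := by
  set m := card s
  rcases lt_or_ge m j with hjm | hjm
  · rw [esymm_of_card_lt (by rwa [card_map])]
    refine (Finset.sum_eq_zero fun r _ => ?_).symm
    rcases le_or_gt r m with hr | hr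
    · rw [Nat.choose_eq_zero_of_lt (by omega), Nat.cast_zero, zero_mul, zero_mul]
    · rw [esymm_of_card_lt hr, mul_zero, zero_mul]
  have hcomp : (s.map fun a => X + C (a + c)).prod =
      (s.map fun a => X + C a).prod.comp (X + C c) := by
    simp [multiset_prod_comp, map_map, add_assoc, add_comm (C c)]
  have hcoeff := congrArg (coeff · (m - j)) hcomp
  rw [prod_X_add_C_coeff' s (· + c) (by omega), show m - (m - j) = j by omega,
    prod_X_add_C_eq_sum_esymm] at hcoeff
  rw [hcoeff]
  simp only [Polynomial.sum_comp, mul_comp, C_comp, X_pow_comp, finsetSum_coeff, coeff_C_mul,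
    coeff_X_add_C_pow]
  rw [← Finset.sum_subset (Finset.range_subset_range.2 (by omega : j + 1 ≤ m + 1))
    fun r hrm hr => by
      rw [Finset.mem_range] at hrm hr
      rw [Nat.choose_eq_zero_of_lt (by omega), Nat.cast_zero, mul_zero, mul_zero]]
  refine Finset.sum_congr rfl fun r hr => ?_
  rw [Finset.mem_range] at hr
  rw [Nat.choose_symm_of_eq_add (show m - r = (j - r) + (m - j) by omega),
    show m - r - (m - j) = j - r by omega]
  ring

section OrderedRing

variable {R : Type*} [CommRing R] [LinearOrder R] [IsStrictOrderedRing R]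

theorem esymm_pos {s : Multiset R} (hs : ∀ a ∈ s, 0 < a) {j : ℕ} (hj : j ≤ card s) :
    0 < s.esymm j := by
  induction s using Multiset.induction generalizing j with
  | empty => simp_all
  | cons a s ih =>
    have ih' := fun {j} => ih (fun b hb => hs b (mem_cons_of_mem hb)) (j := j)
    rcases j with _ | j
    · simp
    rw [card_cons] at hj
    rw [esymm_cons_succ]
    have hprod : 0 < a * s.esymm j := mul_pos (hs a (mem_cons_self a s)) (ih' (by omega))
    rcases lt_or_ge (card s) (j + 1) with h | h
    · rwa [esymm_of_card_lt h, zero_add]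
    · exact add_pos (ih' h) hprod

theorem esymm_map_add_const_pos {s : Multiset R} {k : ℕ} (hs : ∀ r ≤ k, 0 < s.esymm r)
    {c : R} (hc : 0 ≤ c) : ∀ r ≤ k, 0 < (s.map (· + c)).esymm r := by
  intro j hj
  rw [esymm_map_add_const]
  refine Finset.sum_pos' (fun r hr => ?_) ⟨j, Finset.self_mem_range_succ j, ?_⟩
  · rw [Finset.mem_range] at hr
    have := hs r (by omega)
    positivity
  · simpa using hs j hj

end OrderedRing

theorem continuous_esymm_map_add_const (s : Multiset ℝ) (j : ℕ) :
    Continuous fun c : ℝ => (s.map (· + c)).esymm j := by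
  simp_rw [esymm_map_add_const]
  fun_prop

theorem sq_sum_le_card_mul_sum_sq (s : Multiset ℝ) :
    s.sum ^ 2 ≤ card s * (s.map (· ^ 2)).sum := by
  have hs : (Finset.univ : Finset (Fin s.toList.length)).val.map s.toList.get = s := by
    rw [Fin.univ_val_map, List.ofFn_get, coe_toList]
  have := _root_.sq_sum_le_card_mul_sum_sq (s := Finset.univ) (f := s.toList.get)
  rw [Finset.card_univ, Fintype.card_fin] at this
  calc s.sum ^ 2 = (∑ i, s.toList.get i) ^ 2 := by rw [Finset.sum_eq_multiset_sum, hs]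
    _ ≤ s.toList.length * ∑ i, s.toList.get i ^ 2 := this
    _ = card s * (s.map (· ^ 2)).sum := by
      conv_rhs => rw [← hs, map_map, card_map]
      simp [Finset.sum_eq_multiset_sum]

/-- `σ_{q+1} = σ_{q+2} σ_1(1/s)` and `σ_q = σ_{q+2} σ_2(1/s)`, so this is Cauchy–Schwarz for
`1/s`. -/
theorem newton_ineq_of_card_eq (s : Multiset ℝ) (q : ℕ) (hq : card s = q + 2) :
    2 * (q + 2) * (s.esymm q * s.esymm (q + 2)) ≤ (q + 1) * s.esymm (q + 1) ^ 2 := by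
  by_cases h0 : (0 : ℝ) ∈ s
  · rw [← hq, esymm_card, prod_eq_zero h0, mul_zero, mul_zero]
    positivity
  have hs : ∀ a ∈ s, a ≠ 0 := fun a ha h => h0 (h ▸ ha)
  set t := s.map (·⁻¹)
  have e0 : s.esymm (q + 2) = s.prod := hq ▸ esymm_card s
  have e1 : s.esymm (q + 1) = s.prod * t.sum := by
    rw [← esymm_one, prod_mul_esymm_map_inv hs (by omega), hq]
    rfl
  have e2 : 2 * s.esymm q = s.prod * (t.sum ^ 2 - (t.map (· ^ 2)).sum) := by
    rw [← two_mul_esymm_two, mul_left_comm, prod_mul_esymm_map_inv hs (by omega), hq]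
    rfl
  have hcs := sq_sum_le_card_mul_sum_sq t
  rw [card_map, hq] at hcs
  push_cast at hcs
  calc 2 * (q + 2) * (s.esymm q * s.esymm (q + 2))
      = (q + 2) * s.prod ^ 2 * (t.sum ^ 2 - (t.map (· ^ 2)).sum) := by
        rw [e0]; linear_combination (q + 2) * s.prod * e2
    _ ≤ (q + 1) * s.esymm (q + 1) ^ 2 := by
        rw [e1]; nlinarith [mul_le_mul_of_nonneg_left hcs (sq_nonneg s.prod)]

open Polynomial in
/-- `t` is the multiset of negated roots of `(∏ (X + a))'`, real-rooted by Rolle's theorem; the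
identity says that differentiation preserves the normalised means `σ_r / C(m, r)`. -/
theorem exists_esymm_derivative (s : Multiset ℝ) (m : ℕ) (hs : card s = m + 1) :
    ∃ t : Multiset ℝ, card t = m ∧
      ∀ r ≤ m, (m + 1 : ℝ) * t.esymm r = (m + 1 - r : ℝ) * s.esymm r := by
  set P := (s.map fun a => X + C a).prod
  have hP : P = ((s.map Neg.neg).map fun a => X - C a).prod := by
    simp [P, map_map, sub_eq_add_neg]
  have hPcoeff : ∀ k ≤ m + 1, P.coeff k = s.esymm (m + 1 - k) := fun k hk => by
    rw [prod_X_add_C_coeff s (hs ▸ hk), hs]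
  have hProots : card P.roots = m + 1 := by
    rw [hP, roots_multiset_prod_X_sub_C, card_map, hs]
  have hPdeg : P.natDegree = m + 1 := by
    rw [hP, natDegree_multiset_prod_X_sub_C_eq_card, card_map, hs]
  set Q := derivative P
  have hQcoeff : ∀ r ≤ m, Q.coeff (m - r) = (m + 1 - r : ℝ) * s.esymm r := fun r hr => by
    rw [coeff_derivative, hPcoeff _ (by omega), show m + 1 - (m - r + 1) = r by omega]
    push_cast [Nat.cast_sub hr]
    ring
  have hQdeg : Q.natDegree = m := by
    refine le_antisymm ?_ (le_natDegree_of_ne_zero ?_)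
    · have : Q.natDegree < P.natDegree := natDegree_derivative_lt (by omega)
      omega
    · rw [← Nat.sub_zero m, hQcoeff 0 (by omega)]
      simp only [Nat.cast_zero, sub_zero, esymm_zero, mul_one]
      positivity
  have hQroots : card Q.roots = Q.natDegree := by
    have : card P.roots ≤ card Q.roots + 1 := card_roots_le_derivative P
    have := card_roots' Q
    omega
  refine ⟨Q.roots.map Neg.neg, by rw [card_map, hQroots, hQdeg], fun r hr => ?_⟩
  have hlead : Q.leadingCoeff = m + 1 := by
    rw [leadingCoeff, hQdeg, ← Nat.sub_zero m, hQcoeff 0 (by omega)]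
    simp
  have hvieta := coeff_eq_esymm_roots_of_card hQroots (k := m - r) (by omega)
  rw [hlead, hQdeg, show m - (m - r) = r by omega, hQcoeff r hr] at hvieta
  rw [esymm_neg, hvieta]
  ring

/-- Newton's inequality `E_j E_{j+2} ≤ E_{j+1}²` for `E_r = σ_r / C(m, r)`, with the binomial
coefficients cleared. -/
theorem newton_ineq (s : Multiset ℝ) (j : ℕ) (hj : j + 2 ≤ card s) :
    (card s - j : ℝ) * (j + 2) * (s.esymm j * s.esymm (j + 2)) ≤
      (card s - j - 1 : ℝ) * (j + 1) * s.esymm (j + 1) ^ 2 := by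
  obtain ⟨d, hd⟩ := Nat.exists_eq_add_of_le hj
  induction d generalizing s with
  | zero =>
    have := newton_ineq_of_card_eq s j hd
    rw [hd]
    push_cast
    linarith
  | succ d ih =>
    set m := j + 2 + d
    obtain ⟨t, ht, hts⟩ := exists_esymm_derivative s m hd
    have hIH := ih t (by omega) ht
    have h0 := hts j (by omega)
    have h1 := hts (j + 1) (by omega)
    have h2 := hts (j + 2) (by omega)
    have hcard : (card s : ℝ) = m + 1 := by rw [hd]; simp only [m]; push_cast; ring
    have hm : (2 : ℝ) ≤ m - j := by simp only [m]; push_cast; linarith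
    rw [ht] at hIH
    rw [hcard]
    push_cast at h1 h2
    refine le_of_mul_le_mul_left ?_ (by nlinarith : (0 : ℝ) < (m - j) * (m - j - 1))
    calc (m - j) * (m - j - 1) * ((m + 1 - j) * (j + 2) * (s.esymm j * s.esymm (j + 2)))
        = (m + 1) ^ 2 * ((m - j) * (j + 2) * (t.esymm j * t.esymm (j + 2))) := by
          linear_combination -(m - j) * (j + 2) *
            (s.esymm (j + 2) * (m - 1 - j) * h0 + (m + 1) * t.esymm j * h2)
      _ ≤ (m + 1) ^ 2 * ((m - j - 1) * (j + 1) * t.esymm (j + 1) ^ 2) := by gcongr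
      _ = (m - j) * (m - j - 1) * ((m + 1 - j - 1) * (j + 1) * s.esymm (j + 1) ^ 2) := by
          linear_combination (m - j - 1) * (j + 1) *
            ((m + 1) * t.esymm (j + 1) + (m - j) * s.esymm (j + 1)) * h1

theorem esymm_mul_esymm_lt_sq {s : Multiset ℝ} {j : ℕ} (h0 : 0 < s.esymm j)
    (h2 : 0 < s.esymm (j + 2)) : s.esymm j * s.esymm (j + 2) < s.esymm (j + 1) ^ 2 := by
  have hcard : j + 2 ≤ card s := by
    by_contra h
    rw [esymm_of_card_lt (by omega)] at h2
    exact h2.false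
  have hnewton := newton_ineq s j hcard
  have hm : (2 : ℝ) ≤ card s - j := by
    rw [le_sub_iff_add_le]; exact_mod_cast (by omega : 2 + j ≤ card s)
  by_contra! hle
  have := mul_le_mul_of_nonneg_left hle
    (mul_nonneg (by linarith : (0 : ℝ) ≤ card s - j - 1) (by positivity : (0 : ℝ) ≤ j + 1))
  nlinarith [mul_pos h0 h2]

theorem esymm_succ_mul_lt_mul_esymm_succ {s : Multiset ℝ} {p q : ℕ} (hpq : p < q)
    (hs : ∀ r ≤ q, 0 < s.esymm r) :
    s.esymm (q + 1) * s.esymm p < s.esymm q * s.esymm (p + 1) := by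
  induction q, hpq using Nat.le_induction with
  | base =>
    rcases le_or_gt (s.esymm (p + 2)) 0 with h | h
    · nlinarith [hs p (by omega), hs (p + 1) le_rfl]
    · linarith [esymm_mul_esymm_lt_sq (hs p (by omega)) h]
  | succ q hpq ih =>
    have ih := ih fun r hr => hs r (by omega)
    have hp := hs p (by omega)
    have hq := hs q (by omega)
    have hq1 := hs (q + 1) le_rfl
    rcases le_or_gt (s.esymm (q + 2)) 0 with h | h
    · nlinarith [hs (p + 1) (by omega)]
    · have hnewton := esymm_mul_esymm_lt_sq hq h
      refine lt_of_mul_lt_mul_left ?_ hq.le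
      nlinarith [mul_lt_mul_of_pos_right hnewton hp, mul_lt_mul_of_pos_left ih hq1]

/-- Along the ray `s + c`, `c ≥ 0`, which stays in the cones, `σ_{j+1}` cannot vanish: a zero
would give `σ_{j+2}(s + c) = σ_{j+2}(a + c, s + c) > 0` and contradict
`σ_j σ_{j+2} < σ_{j+1}²`. As `σ_{j+1}(s + c) > 0` for large `c`, continuity gives
`σ_{j+1}(s) > 0`. -/
theorem esymm_pos_of_cons {k : ℕ} {a : ℝ} {s : Multiset ℝ}
    (h : ∀ r ≤ k, 0 < (a ::ₘ s).esymm r) : ∀ r < k, 0 < s.esymm r := by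
  induction k generalizing a s with
  | zero => intro r hr; omega
  | succ k ih =>
    intro r hr
    rcases Nat.lt_succ_iff_lt_or_eq.1 hr with hr | rfl
    · exact ih (fun r hr => h r (by omega)) r hr
    rcases r with _ | j
    · simp
    have hcard : j + 1 ≤ card s := by
      by_contra hlt
      have := h (j + 2) le_rfl
      rw [esymm_of_card_lt (by rw [card_cons]; omega)] at this
      exact this.false
    have hne : ∀ c : ℝ, 0 ≤ c → (s.map (· + c)).esymm (j + 1) ≠ 0 := by
      intro c hc hzero
      have hshift := esymm_map_add_const_pos h hc
      rw [map_cons] at hshift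
      have hj := ih (fun r hr => hshift r (by omega)) j (by omega)
      have h2 := hshift (j + 2) le_rfl
      rw [esymm_cons_succ, hzero, mul_zero, add_zero] at h2
      have := esymm_mul_esymm_lt_sq hj h2
      rw [hzero] at this
      nlinarith [mul_pos hj h2]
    have habs : ∀ x ∈ s.map abs, 0 ≤ x := fun x hx => by
      obtain ⟨y, -, rfl⟩ := mem_map.1 hx
      exact abs_nonneg y
    set T := (s.map abs).sum + 1
    have hT : 0 ≤ T := add_nonneg (sum_nonneg habs) zero_le_one
    have hposT : 0 < (s.map (· + T)).esymm (j + 1) := by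
      refine esymm_pos (fun x hx => ?_) (by rwa [card_map])
      obtain ⟨b, hb, rfl⟩ := mem_map.1 hx
      linarith [neg_abs_le b, single_le_sum habs _ (mem_map_of_mem abs hb)]
    by_contra hle
    obtain ⟨c, hc, hfc⟩ := intermediate_value_Icc hT
      (continuous_esymm_map_add_const s (j + 1)).continuousOn ⟨by simpa using hle, hposT.le⟩
    exact hne c hc.1 hfc

end Multiset

theorem esymm_eq_esymm_cons {n : ℕ} (x : Fin n → ℝ) (i : Fin n) (k : ℕ) :
    esymm n k x = (x i ::ₘ (univ.erase i).val.map x).esymm k := by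
  rw [esymm, ← Finset.esymm_map_val, ← Multiset.map_cons, erase_val,
    Multiset.cons_erase (mem_univ_val i)]

theorem esymmDel_eq_esymm {n : ℕ} (x : Fin n → ℝ) (i : Fin n) (k : ℕ) :
    esymmDel n k x i = ((univ.erase i).val.map x).esymm k :=
  (Finset.esymm_map_val x _ k).symm

theorem hessian_quotient_elliptic_general (n k l : ℕ) (hlk : l < k)
    (x : Fin n → ℝ) (hx : x ∈ gardingCone n k) (i : Fin n) :
    0 < esymmDel n (k - 1) x i * esymm n l x -
        esymm n k x * esymmDelZ n ((l : ℤ) - 1) x i := by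
  have hcone : ∀ r ≤ k, 0 < (x i ::ₘ (univ.erase i).val.map x).esymm r := fun r hr => by
    rcases r with _ | r
    · simp
    · rw [← esymm_eq_esymm_cons]; exact hx (r + 1) (by omega) hr
  simp only [esymm_eq_esymm_cons x i, esymmDel_eq_esymm, esymmDelZ]
  generalize (univ.erase i).val.map x = s at hcone ⊢
  have hs := Multiset.esymm_pos_of_cons hcone
  obtain ⟨q, rfl⟩ : ∃ q, k = q + 1 := ⟨k - 1, by omega⟩
  rw [Nat.add_sub_cancel]
  rcases l with _ | p
  · simpa using hs q (by omega)
  · rw [if_neg (by omega), show ((p + 1 : ℕ) : ℤ) - 1 = p by push_cast; ring,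
      Int.toNat_natCast, Multiset.esymm_cons_succ, Multiset.esymm_cons_succ]
    have := Multiset.esymm_succ_mul_lt_mul_esymm_succ (p := p) (q := q) (by omega)
      fun r hr => hs r (by omega)
    linarith

/-- Ellipticity: for λ ∈ Γ_k and 0 ≤ l < k ≤ n, each partial derivative of
F(λ) = [σ_k(λ)/σ_l(λ)]^{1/(k-l)} is strictly positive, i.e.
σ_{k-1}(λ|i) σ_l(λ) - σ_k(λ) σ_{l-1}(λ|i) > 0 for each i. -/
theorem hessian_quotient_elliptic (n k l : ℕ) (hlk : l < k) (hkn : k ≤ n)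
    (x : Fin n → ℝ) (hx : x ∈ gardingCone n k) (i : Fin n) :
    0 < esymmDel n (k - 1) x i * esymm n l x -
        esymm n k x * esymmDelZ n ((l : ℤ) - 1) x i :=
  hessian_quotient_elliptic_general n k l hlk x hx i
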